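/- (Theorem 3.4(i), global convergence.) Let n ≥ 1, ε > 0, let Ω̄ ⊆ ℝ^d be nonempty and compact, and let A(x) := f₁(x)A₁ + ⋯ + f_κ(x)A_κ. Let (𝒱_k)_{k≥1} be nonzero linear subspaces of ℂⁿ with 𝒱_k ⊆ 𝒱_{k+1} for all k ≥ 1, and let (x^(k))_{k≥2} be points of Ω̄ such that for every k ≥ 2: (a) α^{𝒱_{k−1}}_ε(A(x^(k))) ≤ α^{𝒱_{k−1}}_ε(A(x)) for all x ∈ Ω̄; and (b) α^{𝒱_k}_ε(A(x^(k))) = α_ε(A(x^(k))). Assume further: (c) Λ^{𝒱_1}_ε(A(x)) ≠ ∅ for every x ∈ Ω̄; (d) there exist ζ > 0 and φ > 0 such that for every k ≥ 2 and all x, y ∈ Ω̄ with ‖x − x^(k)‖ ≤ φ and ‖y − x^(k)‖ ≤ φ one has |α^{𝒱_k}_ε(A(x)) − α^{𝒱_k}_ε(A(y))| ≤ ζ‖x − y‖; and (e) the map x ↦ α_ε(A(x)) is continuous on Ω̄. Then the limit of every convergent subsequence of (x^(k)) is a global minimizer of α_ε(A(·)) over Ω̄: if ℓ₁ < ℓ₂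 < ⋯ (each ≥ 2) and x^(ℓ_k) → x̄ as k → ∞, then α_ε(A(x̄)) = inf{α_ε(A(x)) : x ∈ Ω̄}. -/

import Mathlib

noncomputable def enorm2 {ι : Type*} [Fintype ι] (v : ι → ℂ) : ℝ :=
  ‖(WithLp.equiv 2 (ι → ℂ)).symm v‖

noncomputable def sigMin {ι κ : Type*} [Fintype ι] [Fintype κ] (M : Matrix ι κ ℂ) : ℝ :=
  sInf {r : ℝ | ∃ w : κ → ℂ, enorm2 w = 1 ∧ r = enorm2 (M.mulVec w)}

noncomputable def sigV {n : ℕ} (𝒱 : Submodule ℂ (Fin n → ℂ))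
    (A : Matrix (Fin n) (Fin n) ℂ) (z : ℂ) : ℝ :=
  sInf {r : ℝ | ∃ v ∈ 𝒱, enorm2 v = 1 ∧ r = enorm2 ((A - z • 1).mulVec v)}

noncomputable def pspec {n : ℕ} (ε : ℝ) (A : Matrix (Fin n) (Fin n) ℂ) : Set ℂ :=
  {z | sigMin (A - z • 1) ≤ ε}

noncomputable def psa {n : ℕ} (ε : ℝ) (A : Matrix (Fin n) (Fin n) ℂ) : ℝ :=
  sSup (Complex.re '' pspec ε A)

noncomputable def pspecV {n : ℕ} (ε : ℝ) (𝒱 : Submodule ℂ (Fin n → ℂ))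
    (A : Matrix (Fin n) (Fin n) ℂ) : Set ℂ :=
  {z | sigV 𝒱 A z ≤ ε}

noncomputable def psaV {n : ℕ} (ε : ℝ) (𝒱 : Submodule ℂ (Fin n → ℂ))
    (A : Matrix (Fin n) (Fin n) ℂ) : ℝ :=
  sSup (Complex.re '' pspecV ε 𝒱 A)

noncomputable def Amap {n d κ : ℕ} (f : Fin κ → EuclideanSpace ℝ (Fin d) → ℝ)
    (As : Fin κ → Matrix (Fin n) (Fin n) ℂ) (x : EuclideanSpace ℝ (Fin d)) :
    Matrix (Fin n) (Fin n) ℂ :=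
  ∑ j, (f j x : ℂ) • As j

noncomputable def opNorm2 {n : ℕ} (Δ : Matrix (Fin n) (Fin n) ℂ) : ℝ :=
  sSup {r : ℝ | ∃ w : Fin n → ℂ, enorm2 w = 1 ∧ r = enorm2 (Δ.mulVec w)}

/-! Write `g = α_ε(A(·))` and `G_j = α_ε^{𝒱_j}(A(·))`. Restricting `σ_min` to a subspace can only
raise it, so the reduced pseudospectra grow with `𝒱_j` and `G_j` increases with `j` and stays below
`g = G_⊤`. For consecutive terms `p = x^(ℓ_k)`, `q = x^(ℓ_{k+1})` of the subsequence, interpolation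
at `p`, the Lipschitz bound near `p`, monotonicity up to level `ℓ_{k+1} - 1` and minimality of `q`
at that level give `g p ≤ g y + ζ ‖p - q‖` for every `y ∈ Ω̄`. As `k → ∞`, `‖p - q‖ → 0` and
continuity of `g` give `g x̄ ≤ g y`. -/

open Filter Topology

lemma enorm2_eq_norm_toLp {ι : Type*} [Fintype ι] (v : ι → ℂ) :
    enorm2 v = ‖WithLp.toLp 2 v‖ := rfl

lemma Submodule.exists_enorm2_eq_one {n : ℕ} {𝒱 : Submodule ℂ (Fin n → ℂ)} (h𝒱 : 𝒱 ≠ ⊥) :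
    ∃ v ∈ 𝒱, enorm2 v = 1 := by
  obtain ⟨v, hv𝒱, hv⟩ := Submodule.exists_mem_ne_zero_of_ne_bot h𝒱
  have hv' : ‖WithLp.toLp 2 v‖ ≠ 0 := by simpa using hv
  refine ⟨(‖WithLp.toLp 2 v‖⁻¹ : ℂ) • v, 𝒱.smul_mem _ hv𝒱, ?_⟩
  rw [enorm2_eq_norm_toLp, WithLp.toLp_smul, norm_smul, norm_inv, Complex.norm_real, norm_norm,
    inv_mul_cancel₀ hv']

lemma sigMin_sub_smul_one_eq_sigV_top {n : ℕ} (A : Matrix (Fin n) (Fin n) ℂ) (z : ℂ) :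
    sigMin (A - z • 1) = sigV ⊤ A z := by
  simp [sigMin, sigV]

lemma psa_eq_psaV_top {n : ℕ} (ε : ℝ) (A : Matrix (Fin n) (Fin n) ℂ) :
    psa ε A = psaV ε ⊤ A := by
  simp only [psa, psaV, pspec, pspecV, sigMin_sub_smul_one_eq_sigV_top]

lemma sigV_anti {n : ℕ} {𝒱 𝒲 : Submodule ℂ (Fin n → ℂ)} (h𝒱 : 𝒱 ≠ ⊥) (hle : 𝒱 ≤ 𝒲)
    (A : Matrix (Fin n) (Fin n) ℂ) (z : ℂ) : sigV 𝒲 A z ≤ sigV 𝒱 A z := by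
  obtain ⟨v, hv𝒱, hv⟩ := Submodule.exists_enorm2_eq_one h𝒱
  refine csInf_le_csInf ⟨0, ?_⟩ ⟨_, v, hv𝒱, hv, rfl⟩ ?_
  · rintro r ⟨w, -, -, rfl⟩
    exact norm_nonneg _
  · rintro r ⟨w, hw𝒱, hw, rfl⟩
    exact ⟨w, hle hw𝒱, hw, rfl⟩

lemma norm_sub_l2_opNorm_le_sigV {n : ℕ} {𝒱 : Submodule ℂ (Fin n → ℂ)} (h𝒱 : 𝒱 ≠ ⊥)
    (A : Matrix (Fin n) (Fin n) ℂ) (z : ℂ) :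
    ‖z‖ - ‖Matrix.toEuclideanCLM (n := Fin n) (𝕜 := ℂ) A‖ ≤ sigV 𝒱 A z := by
  obtain ⟨v, hv𝒱, hv⟩ := Submodule.exists_enorm2_eq_one h𝒱
  refine le_csInf ⟨_, v, hv𝒱, hv, rfl⟩ ?_
  rintro r ⟨w, -, hw, rfl⟩
  rw [enorm2_eq_norm_toLp] at hw ⊢
  have hAw := (Matrix.toEuclideanCLM (n := Fin n) (𝕜 := ℂ) A).le_opNorm (WithLp.toLp 2 w)
  rw [Matrix.toEuclideanCLM_toLp, hw, mul_one] at hAw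
  have hzw := norm_sub_norm_le (z • WithLp.toLp 2 w) (WithLp.toLp 2 (A.mulVec w))
  rw [norm_smul, hw, mul_one, norm_sub_rev] at hzw
  rw [Matrix.sub_mulVec, Matrix.smul_mulVec, Matrix.one_mulVec, WithLp.toLp_sub,
    WithLp.toLp_smul]
  linarith

lemma bddAbove_re_pspecV {n : ℕ} {𝒱 : Submodule ℂ (Fin n → ℂ)} (h𝒱 : 𝒱 ≠ ⊥) (ε : ℝ)
    (A : Matrix (Fin n) (Fin n) ℂ) : BddAbove (Complex.re '' pspecV ε 𝒱 A) := by
  refine ⟨ε + ‖Matrix.toEuclideanCLM (n := Fin n) (𝕜 := ℂ) A‖, ?_⟩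
  rintro _ ⟨z, hz, rfl⟩
  have := norm_sub_l2_opNorm_le_sigV h𝒱 A z
  have : sigV 𝒱 A z ≤ ε := hz
  linarith [Complex.re_le_norm z]

lemma pspecV_mono {n : ℕ} {𝒱 𝒲 : Submodule ℂ (Fin n → ℂ)} (h𝒱 : 𝒱 ≠ ⊥) (hle : 𝒱 ≤ 𝒲)
    {ε : ℝ} {A : Matrix (Fin n) (Fin n) ℂ} : pspecV ε 𝒱 A ⊆ pspecV ε 𝒲 A :=
  fun z hz => (sigV_anti h𝒱 hle A z).trans hz

lemma psaV_mono {n : ℕ} {𝒱 𝒲 : Submodule ℂ (Fin n → ℂ)} (h𝒱 : 𝒱 ≠ ⊥) (hle : 𝒱 ≤ 𝒲)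
    {ε : ℝ} {A : Matrix (Fin n) (Fin n) ℂ} (hne : (pspecV ε 𝒱 A).Nonempty) :
    psaV ε 𝒱 A ≤ psaV ε 𝒲 A :=
  csSup_le_csSup (bddAbove_re_pspecV (ne_bot_of_le_ne_bot h𝒱 hle) ε A) (hne.image _)
    (Set.image_mono (pspecV_mono h𝒱 hle))

lemma psaV_le_psa {n : ℕ} {𝒱 : Submodule ℂ (Fin n → ℂ)} (h𝒱 : 𝒱 ≠ ⊥)
    {ε : ℝ} {A : Matrix (Fin n) (Fin n) ℂ} (hne : (pspecV ε 𝒱 A).Nonempty) :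
    psaV ε 𝒱 A ≤ psa ε A :=
  psa_eq_psaV_top ε A ▸ psaV_mono h𝒱 le_top hne

lemma le_of_tendsto_of_le_add_dist_succ {X : Type*} [PseudoMetricSpace X] {g : X → ℝ}
    {p : ℕ → X} {a : X} {c ζ φ : ℝ} (hφ : 0 < φ) (hp : Tendsto p atTop (𝓝 a))
    (hgp : Tendsto (g ∘ p) atTop (𝓝 (g a)))
    (h : ∀ k, dist (p (k + 1)) (p k) ≤ φ → g (p k) ≤ c + ζ * dist (p k) (p (k + 1))) :
    g a ≤ c := by
  have hstep : Tendsto (fun k => dist (p k) (p (k + 1))) atTop (𝓝 0) := by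
    simpa using hp.dist (hp.comp (tendsto_add_atTop_nat 1))
  have hbound : Tendsto (fun k => c + ζ * dist (p k) (p (k + 1))) atTop (𝓝 c) := by
    simpa using tendsto_const_nhds.add (hstep.const_mul ζ)
  refine le_of_tendsto_of_tendsto hgp hbound ?_
  filter_upwards [hstep.eventually (gt_mem_nhds hφ)] with k hk
  exact h k (by rw [dist_comm]; exact hk.le)

section SubspaceFramework

variable {X : Type*} [PseudoMetricSpace X] {Ω : Set X} {g : X → ℝ} {G : ℕ → X → ℝ}
  {x : ℕ → X} {ζ φ : ℝ}

lemma le_add_dist_of_interpolate_of_isMinOn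
    (hG_mono : ∀ j m, 1 ≤ j → j ≤ m → ∀ y ∈ Ω, G j y ≤ G m y)
    (hG_le : ∀ j, 1 ≤ j → ∀ y ∈ Ω, G j y ≤ g y)
    (hxΩ : ∀ k, 2 ≤ k → x k ∈ Ω)
    (hmin : ∀ k, 2 ≤ k → ∀ y ∈ Ω, G (k - 1) (x k) ≤ G (k - 1) y)
    (hinterp : ∀ k, 2 ≤ k → G k (x k) = g (x k)) (hφ : 0 ≤ φ)
    (hlip : ∀ k, 2 ≤ k → ∀ y ∈ Ω, ∀ y' ∈ Ω, dist y (x k) ≤ φ → dist y' (x k) ≤ φ →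
      |G k y - G k y'| ≤ ζ * dist y y')
    {j m : ℕ} (hj : 2 ≤ j) (hjm : j < m) (hdist : dist (x m) (x j) ≤ φ) {y : X} (hy : y ∈ Ω) :
    g (x j) ≤ g y + ζ * dist (x j) (x m) := by
  have hxm : x m ∈ Ω := hxΩ m (by omega)
  have hlipj : G j (x j) - G j (x m) ≤ ζ * dist (x j) (x m) :=
    (abs_sub_le_iff.1 (hlip j hj _ (hxΩ j hj) _ hxm (by simpa using hφ) hdist)).1
  calc g (x j) = G j (x j) := (hinterp j hj).symm
    _ ≤ G j (x m) + ζ * dist (x j) (x m) := by linarith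
    _ ≤ G (m - 1) (x m) + ζ * dist (x j) (x m) := by
      gcongr; exact hG_mono j (m - 1) (by omega) (by omega) _ hxm
    _ ≤ G (m - 1) y + ζ * dist (x j) (x m) := by gcongr; exact hmin m (by omega) y hy
    _ ≤ g y + ζ * dist (x j) (x m) := by gcongr; exact hG_le _ (by omega) y hy

theorem isMinOn_of_tendsto_of_interpolate_of_isMinOn
    (hG_mono : ∀ j m, 1 ≤ j → j ≤ m → ∀ y ∈ Ω, G j y ≤ G m y)
    (hG_le : ∀ j, 1 ≤ j → ∀ y ∈ Ω, G j y ≤ g y)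
    (hxΩ : ∀ k, 2 ≤ k → x k ∈ Ω)
    (hmin : ∀ k, 2 ≤ k → ∀ y ∈ Ω, G (k - 1) (x k) ≤ G (k - 1) y)
    (hinterp : ∀ k, 2 ≤ k → G k (x k) = g (x k)) (hφ : 0 < φ)
    (hlip : ∀ k, 2 ≤ k → ∀ y ∈ Ω, ∀ y' ∈ Ω, dist y (x k) ≤ φ → dist y' (x k) ≤ φ →
      |G k y - G k y'| ≤ ζ * dist y y')
    {a : X} (hg : ContinuousWithinAt g Ω a) {ℓ : ℕ → ℕ} (hℓ : StrictMono ℓ)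
    (hℓ2 : ∀ k, 2 ≤ ℓ k) (hconv : Tendsto (x ∘ ℓ) atTop (𝓝 a)) :
    IsMinOn g Ω a := by
  have hgx : Tendsto (g ∘ x ∘ ℓ) atTop (𝓝 (g a)) :=
    hg.tendsto.comp (tendsto_nhdsWithin_iff.2 ⟨hconv, .of_forall fun k => hxΩ _ (hℓ2 k)⟩)
  refine isMinOn_iff.2 fun y hy =>
    le_of_tendsto_of_le_add_dist_succ (ζ := ζ) hφ hconv hgx fun k hk => ?_
  exact le_add_dist_of_interpolate_of_isMinOn hG_mono hG_le hxΩ hmin hinterp hφ.le hlip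
    (hℓ2 k) (hℓ k.lt_succ_self) hk hy

end SubspaceFramework

theorem stmt1_general {n d κ : ℕ} {ε : ℝ}
    (Ω : Set (EuclideanSpace ℝ (Fin d))) (hΩc : IsCompact Ω)
    (f : Fin κ → EuclideanSpace ℝ (Fin d) → ℝ) (As : Fin κ → Matrix (Fin n) (Fin n) ℂ)
    (𝒱 : ℕ → Submodule ℂ (Fin n → ℂ)) (h𝒱bot : ∀ k, 1 ≤ k → 𝒱 k ≠ ⊥)
    (h𝒱mono : ∀ k, 1 ≤ k → 𝒱 k ≤ 𝒱 (k + 1))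
    (x : ℕ → EuclideanSpace ℝ (Fin d)) (hxΩ : ∀ k, 2 ≤ k → x k ∈ Ω)
    (hmin : ∀ k, 2 ≤ k → ∀ y ∈ Ω,
      psaV ε (𝒱 (k - 1)) (Amap f As (x k)) ≤ psaV ε (𝒱 (k - 1)) (Amap f As y))
    (hinterp : ∀ k, 2 ≤ k → psaV ε (𝒱 k) (Amap f As (x k)) = psa ε (Amap f As (x k)))
    (hne : ∀ y ∈ Ω, (pspecV ε (𝒱 1) (Amap f As y)).Nonempty)
    (hlip : ∃ ζ > (0 : ℝ), ∃ φ > (0 : ℝ), ∀ k, 2 ≤ k → ∀ y ∈ Ω, ∀ y' ∈ Ω,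
      ‖y - x k‖ ≤ φ → ‖y' - x k‖ ≤ φ →
      |psaV ε (𝒱 k) (Amap f As y) - psaV ε (𝒱 k) (Amap f As y')| ≤ ζ * ‖y - y'‖)
    (hcont : ContinuousOn (fun y => psa ε (Amap f As y)) Ω)
    (ℓ : ℕ → ℕ) (hℓmono : StrictMono ℓ) (hℓ2 : ∀ k, 2 ≤ ℓ k)
    (xbar : EuclideanSpace ℝ (Fin d))
    (hconv : Filter.Tendsto (fun k => x (ℓ k)) Filter.atTop (nhds xbar)) :
    psa ε (Amap f As xbar) = sInf ((fun y => psa ε (Amap f As y)) '' Ω) := by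
  obtain ⟨ζ, -, φ, hφ, hlip⟩ := hlip
  have hxbar : xbar ∈ Ω := hΩc.isClosed.mem_of_tendsto hconv (.of_forall fun k => hxΩ _ (hℓ2 k))
  have h𝒱le : ∀ j m, 1 ≤ j → j ≤ m → 𝒱 j ≤ 𝒱 m :=
    Nat.rel_of_forall_rel_succ_of_le_of_le (· ≤ ·) h𝒱mono
  have hneV : ∀ j, 1 ≤ j → ∀ y ∈ Ω, (pspecV ε (𝒱 j) (Amap f As y)).Nonempty :=
    fun j hj y hy => (hne y hy).mono (pspecV_mono (h𝒱bot 1 le_rfl) (h𝒱le 1 j le_rfl hj))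
  have hxbar_min : IsMinOn (fun y => psa ε (Amap f As y)) Ω xbar :=
    isMinOn_of_tendsto_of_interpolate_of_isMinOn (G := fun j y => psaV ε (𝒱 j) (Amap f As y))
      (fun j m hj hjm y hy => psaV_mono (h𝒱bot j hj) (h𝒱le j m hj hjm) (hneV j hj y hy))
      (fun j hj y hy => psaV_le_psa (h𝒱bot j hj) (hneV j hj y hy))
      hxΩ hmin hinterp hφ (by simpa only [dist_eq_norm] using hlip) (hcont xbar hxbar)
      hℓmono hℓ2 hconv
  exact (IsLeast.csInf_eq ⟨Set.mem_image_of_mem _ hxbar,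
    Set.forall_mem_image.2 (isMinOn_iff.1 hxbar_min)⟩).symm

theorem stmt1 {n d κ : ℕ} (hn : 1 ≤ n) {ε : ℝ} (hε : 0 < ε)
    (Ω : Set (EuclideanSpace ℝ (Fin d))) (hΩne : Ω.Nonempty) (hΩc : IsCompact Ω)
    (f : Fin κ → EuclideanSpace ℝ (Fin d) → ℝ) (As : Fin κ → Matrix (Fin n) (Fin n) ℂ)
    (𝒱 : ℕ → Submodule ℂ (Fin n → ℂ)) (h𝒱bot : ∀ k, 1 ≤ k → 𝒱 k ≠ ⊥)
    (h𝒱mono : ∀ k, 1 ≤ k → 𝒱 k ≤ 𝒱 (k + 1))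
    (x : ℕ → EuclideanSpace ℝ (Fin d)) (hxΩ : ∀ k, 2 ≤ k → x k ∈ Ω)
    (hmin : ∀ k, 2 ≤ k → ∀ y ∈ Ω,
      psaV ε (𝒱 (k - 1)) (Amap f As (x k)) ≤ psaV ε (𝒱 (k - 1)) (Amap f As y))
    (hinterp : ∀ k, 2 ≤ k → psaV ε (𝒱 k) (Amap f As (x k)) = psa ε (Amap f As (x k)))
    (hne : ∀ y ∈ Ω, (pspecV ε (𝒱 1) (Amap f As y)).Nonempty)
    (hlip : ∃ ζ > (0 : ℝ), ∃ φ > (0 : ℝ), ∀ k, 2 ≤ k → ∀ y ∈ Ω, ∀ y' ∈ Ω,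
      ‖y - x k‖ ≤ φ → ‖y' - x k‖ ≤ φ →
      |psaV ε (𝒱 k) (Amap f As y) - psaV ε (𝒱 k) (Amap f As y')| ≤ ζ * ‖y - y'‖)
    (hcont : ContinuousOn (fun y => psa ε (Amap f As y)) Ω)
    (ℓ : ℕ → ℕ) (hℓmono : StrictMono ℓ) (hℓ2 : ∀ k, 2 ≤ ℓ k)
    (xbar : EuclideanSpace ℝ (Fin d))
    (hconv : Filter.Tendsto (fun k => x (ℓ k)) Filter.atTop (nhds xbar)) :
    psa ε (Amap f As xbar) = sInf ((fun y => psa ε (Amap f As y)) '' Ω) :=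
  stmt1_general Ω hΩc f As 𝒱 h𝒱bot h𝒱mono x hxΩ hmin hinterp hne hlip hcont ℓ hℓmono hℓ2 xbar hconv
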